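/- Let X ~ Beta(α, β) with α, β > 0. Then α·E[(1−X)·log(X/(1−X))] − β·E[X·log(X/(1−X))] = −1. -/

import Mathlib

open MeasureTheory Real Filter

noncomputable def betaB (a b : ℝ) : ℝ := Real.Gamma a * Real.Gamma b / Real.Gamma (a + b)

/-- digamma function ψ = Γ'/Γ -/
noncomputable def digamma (z : ℝ) : ℝ := deriv Real.Gamma z / Real.Gamma z

/-- Beta(a,b) probability density on (0,1). -/
noncomputable def betaPDF (a b x : ℝ) : ℝ := x ^ (a - 1) * (1 - x) ^ (b - 1) / betaB a b

/-- Expectation of `h(X)` for `X ~ Beta(a,b)`. -/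
noncomputable def betaE (a b : ℝ) (h : ℝ → ℝ) : ℝ :=
  ∫ x in Set.Ioo (0:ℝ) 1, h x * betaPDF a b x

/-- Beta(a,b) measure on ℝ. -/
noncomputable def betaMeasure (a b : ℝ) : Measure ℝ :=
  volume.withDensity (fun x => ENNReal.ofReal (Set.indicator (Set.Ioo (0:ℝ) 1) (betaPDF a b) x))

/-! With `w x = x ^ α * (1 - x) ^ β` one has
`w' x = (α * (1 - x) - β * x) * x ^ (α - 1) * (1 - x) ^ (β - 1)`, so the left-hand side is
`B(α, β)⁻¹ * ∫₀¹ logit * w'`. Integrating by parts, the boundary term `logit * w` vanishes at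
both ends, and `logit' * w = x ^ (α - 1) * (1 - x) ^ (β - 1)` integrates to `B(α, β)`. -/

open Set Topology intervalIntegral

noncomputable def betaKernel (a b x : ℝ) : ℝ := x ^ (a - 1) * (1 - x) ^ (b - 1)

noncomputable def logit (x : ℝ) : ℝ := Real.log (x / (1 - x))

section BetaKernel

variable {a b : ℝ}

lemma betaB_pos (ha : 0 < a) (hb : 0 < b) : 0 < betaB a b :=
  ProbabilityTheory.beta_pos ha hb

lemma betaKernel_nonneg {x : ℝ} (hx : x ∈ Icc (0 : ℝ) 1) : 0 ≤ betaKernel a b x :=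
  mul_nonneg (rpow_nonneg hx.1 _) (rpow_nonneg (sub_nonneg.2 hx.2) _)

lemma betaKernel_one_sub (x : ℝ) : betaKernel a b (1 - x) = betaKernel b a x := by
  rw [betaKernel, betaKernel, sub_sub_cancel, mul_comm]

lemma integral_betaKernel (ha : 0 < a) (hb : 0 < b) :
    ∫ x in 0..1, betaKernel a b x = betaB a b := by
  have hcast : Complex.betaIntegral a b = ↑(∫ x in 0..1, betaKernel a b x) := by
    rw [Complex.betaIntegral, ← intervalIntegral.integral_ofReal]
    refine integral_congr fun x hx => ?_
    rw [uIcc_of_le zero_le_one] at hx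
    simp [betaKernel, Complex.ofReal_cpow hx.1, Complex.ofReal_cpow (sub_nonneg.2 hx.2)]
  rw [betaB, ← ProbabilityTheory.beta, ProbabilityTheory.beta_eq_betaIntegralReal a b ha hb,
    hcast, Complex.ofReal_re]

-- The integral is nonzero, and a non-integrable function has integral `0`.
lemma intervalIntegrable_betaKernel (ha : 0 < a) (hb : 0 < b) :
    IntervalIntegrable (betaKernel a b) volume 0 1 :=
  intervalIntegrable_of_integral_ne_zero <| by
    rw [integral_betaKernel ha hb]; exact (betaB_pos ha hb).ne'

lemma intervalIntegrable_log_mul_betaKernel (ha : 0 < a) (hb : 0 < b) :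
    IntervalIntegrable (fun x => log x * betaKernel a b x) volume 0 1 := by
  refine ((intervalIntegrable_betaKernel (half_pos ha) hb).const_mul (2 / a)).mono_fun'
    (by unfold betaKernel; fun_prop) ?_
  rw [uIoc_of_le zero_le_one]
  filter_upwards [ae_restrict_mem measurableSet_Ioc] with x ⟨hx0, hx1⟩
  have hlog : |log x * x ^ (a / 2)| ≤ 2 / a := by
    simpa using (abs_log_mul_self_rpow_lt x (a / 2) hx0 hx1 (half_pos ha)).le
  have hsplit : log x * betaKernel a b x = log x * x ^ (a / 2) * betaKernel (a / 2) b x := by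
    rw [betaKernel, betaKernel, show a - 1 = a / 2 + (a / 2 - 1) by ring, rpow_add hx0]
    ring
  rw [hsplit, norm_mul, Real.norm_eq_abs,
    Real.norm_of_nonneg (betaKernel_nonneg ⟨hx0.le, hx1⟩)]
  exact mul_le_mul_of_nonneg_right hlog (betaKernel_nonneg ⟨hx0.le, hx1⟩)

lemma intervalIntegrable_log_one_sub_mul_betaKernel (ha : 0 < a) (hb : 0 < b) :
    IntervalIntegrable (fun x => log (1 - x) * betaKernel a b x) volume 0 1 := by
  simpa [betaKernel_one_sub] using
    ((intervalIntegrable_log_mul_betaKernel hb ha).comp_sub_left 1).symm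

end BetaKernel

-- Valid for every `x`: at `x = 0` and `x = 1` both sides vanish since `log 0 = 0`.
lemma logit_eq_log_sub_log (x : ℝ) : logit x = log x - log (1 - x) := by
  rcases eq_or_ne x 0 with rfl | hx
  · simp [logit]
  rcases eq_or_ne (1 - x) 0 with h1x | h1x
  · obtain rfl : x = 1 := (sub_eq_zero.1 h1x).symm
    simp [logit]
  · exact log_div hx h1x

lemma logit_one_sub (x : ℝ) : logit (1 - x) = -logit x := by
  rw [logit_eq_log_sub_log, logit_eq_log_sub_log, sub_sub_cancel, neg_sub]

lemma hasDerivAt_logit {x : ℝ} (hx : x ∈ Ioo (0 : ℝ) 1) :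
    HasDerivAt logit (x⁻¹ + (1 - x)⁻¹) x := by
  have hlog1 : HasDerivAt (fun y => log (1 - y)) (-(1 - x)⁻¹) x := by
    simpa [neg_div, div_eq_inv_mul] using
      ((hasDerivAt_id x).const_sub 1).log (sub_pos.2 hx.2).ne'
  rw [show logit = fun y => log y - log (1 - y) from funext logit_eq_log_sub_log]
  exact ((hasDerivAt_log hx.1.ne').sub hlog1).congr_deriv (sub_neg_eq_add _ _)

lemma intervalIntegrable_logit_mul_betaKernel {a b : ℝ} (ha : 0 < a) (hb : 0 < b) :
    IntervalIntegrable (fun x => logit x * betaKernel a b x) volume 0 1 := by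
  simp_rw [logit_eq_log_sub_log, sub_mul]
  exact (intervalIntegrable_log_mul_betaKernel ha hb).sub
    (intervalIntegrable_log_one_sub_mul_betaKernel ha hb)

section Weight

variable {x : ℝ} (hx : x ∈ Ioo (0 : ℝ) 1) (a b : ℝ)
include hx

lemma rpow_mul_one_sub_rpow_eq_mul_betaKernel :
    x ^ a * (1 - x) ^ b = x * (1 - x) * betaKernel a b x := by
  rw [betaKernel, rpow_sub_one hx.1.ne', rpow_sub_one (sub_pos.2 hx.2).ne']
  field_simp [hx.1.ne', (sub_pos.2 hx.2).ne']

lemma hasDerivAt_rpow_mul_one_sub_rpow :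
    HasDerivAt (fun y => y ^ a * (1 - y) ^ b) ((a * (1 - x) - b * x) * betaKernel a b x) x := by
  have h1x : 0 < 1 - x := sub_pos.2 hx.2
  refine ((hasDerivAt_rpow_const (p := a) (Or.inl hx.1.ne')).mul
    (((hasDerivAt_id x).const_sub 1).rpow_const (p := b) (Or.inl h1x.ne'))).congr_deriv ?_
  have hx0 : x ≠ 0 := hx.1.ne'
  rw [id_eq, betaKernel, rpow_sub_one hx0, rpow_sub_one h1x.ne']
  field_simp
  ring

lemma hasDerivAt_logit_mul_rpow_mul_one_sub_rpow :
    HasDerivAt (fun y => logit y * (y ^ a * (1 - y) ^ b))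
      (betaKernel a b x + logit x * ((a * (1 - x) - b * x) * betaKernel a b x)) x := by
  refine ((hasDerivAt_logit hx).mul (hasDerivAt_rpow_mul_one_sub_rpow hx a b)).congr_deriv ?_
  rw [rpow_mul_one_sub_rpow_eq_mul_betaKernel hx]
  have hx0 : x ≠ 0 := hx.1.ne'
  have h1x : 1 - x ≠ 0 := (sub_pos.2 hx.2).ne'
  field_simp
  ring

end Weight

lemma tendsto_logit_mul_rpow_mul_one_sub_rpow_nhdsGT_zero {a : ℝ} (ha : 0 < a) (b : ℝ) :
    Tendsto (fun x => logit x * (x ^ a * (1 - x) ^ b)) (𝓝[>] 0) (𝓝 0) := by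
  have hlog : Tendsto (fun x => log x * x ^ a) (𝓝[>] 0) (𝓝 0) :=
    tendsto_log_mul_rpow_nhdsGT_zero ha
  have hcont : ContinuousAt (fun x => log (1 - x) * x ^ a) 0 := by
    have := continuousAt_rpow_const 0 a (Or.inr ha.le)
    fun_prop (disch := norm_num)
  have hcont' : ContinuousAt (fun x : ℝ => (1 - x) ^ b) 0 := by
    fun_prop (disch := norm_num)
  have h := (hlog.sub (hcont.tendsto.mono_left nhdsWithin_le_nhds)).mul
    (hcont'.tendsto.mono_left nhdsWithin_le_nhds)
  simp only [sub_zero, log_one, zero_mul, one_rpow, mul_one] at h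
  refine h.congr fun x => ?_
  rw [logit_eq_log_sub_log]
  ring

lemma tendsto_logit_mul_rpow_mul_one_sub_rpow_nhdsLT_one (a : ℝ) {b : ℝ} (hb : 0 < b) :
    Tendsto (fun x => logit x * (x ^ a * (1 - x) ^ b)) (𝓝[<] 1) (𝓝 0) := by
  have hrefl : Tendsto (fun x : ℝ => 1 - x) (𝓝[<] 1) (𝓝[>] 0) := by
    simpa using ((continuous_sub_left (1 : ℝ)).continuousWithinAt (s := Iio 1) (x := 1)
      ).tendsto_nhdsWithin (t := Ioi 0) fun y (hy : y < 1) => sub_pos.2 hy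
  have h := ((tendsto_logit_mul_rpow_mul_one_sub_rpow_nhdsGT_zero hb a).comp hrefl).neg
  rw [neg_zero] at h
  refine h.congr fun x => ?_
  simp only [Function.comp_apply, logit_one_sub, sub_sub_cancel]
  ring

lemma integral_logit_mul_deriv_rpow_mul_one_sub_rpow {a b : ℝ} (ha : 0 < a) (hb : 0 < b) :
    ∫ x in 0..1, logit x * ((a * (1 - x) - b * x) * betaKernel a b x) = -betaB a b := by
  have hk := intervalIntegrable_betaKernel ha hb
  have hint : IntervalIntegrable (fun x => logit x * ((a * (1 - x) - b * x) * betaKernel a b x))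
      volume 0 1 := by
    convert (intervalIntegrable_logit_mul_betaKernel ha hb).continuousOn_mul
      (g := fun x => a * (1 - x) - b * x) (by fun_prop) using 1
    funext x
    ring
  have hftc := integral_eq_sub_of_hasDerivAt_of_tendsto zero_lt_one
    (fun x hx => hasDerivAt_logit_mul_rpow_mul_one_sub_rpow hx a b) (hk.add hint)
    (tendsto_logit_mul_rpow_mul_one_sub_rpow_nhdsGT_zero ha b)
    (tendsto_logit_mul_rpow_mul_one_sub_rpow_nhdsLT_one a hb)
  rw [integral_add hk hint, integral_betaKernel ha hb, sub_zero] at hftc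
  linarith

lemma betaE_eq_integral_div (a b : ℝ) (h : ℝ → ℝ) :
    betaE a b h = (∫ x in 0..1, h x * betaKernel a b x) / betaB a b := by
  rw [betaE, integral_of_le zero_le_one, integral_Ioc_eq_integral_Ioo,
    ← MeasureTheory.integral_div]
  simp only [betaPDF, betaKernel, mul_div_assoc]

theorem beta_score_identity_logit (α β : ℝ) (hα : 0 < α) (hβ : 0 < β) :
    α * betaE α β (fun x => (1 - x) * Real.log (x / (1 - x)))
      - β * betaE α β (fun x => x * Real.log (x / (1 - x))) = -1 := by
  change α * betaE α β (fun x => (1 - x) * logit x)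
    - β * betaE α β (fun x => x * logit x) = -1
  have hL := intervalIntegrable_logit_mul_betaKernel hα hβ
  have h1 : IntervalIntegrable (fun x => (1 - x) * logit x * betaKernel α β x) volume 0 1 := by
    simpa only [mul_assoc] using hL.continuousOn_mul (g := fun x => 1 - x) (by fun_prop)
  have h2 : IntervalIntegrable (fun x => x * logit x * betaKernel α β x) volume 0 1 := by
    simpa only [mul_assoc] using hL.continuousOn_mul (g := fun x => x) (by fun_prop)
  calc α * betaE α β (fun x => (1 - x) * logit x) - β * betaE α β (fun x => x * logit x)
      = (∫ x in 0..1, α * ((1 - x) * logit x * betaKernel α β x)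
          - β * (x * logit x * betaKernel α β x)) / betaB α β := by
        rw [betaE_eq_integral_div, betaE_eq_integral_div, integral_sub (h1.const_mul α)
          (h2.const_mul β), intervalIntegral.integral_const_mul,
          intervalIntegral.integral_const_mul]
        ring
    _ = (∫ x in 0..1, logit x * ((α * (1 - x) - β * x) * betaKernel α β x))
          / betaB α β := by
        congr 1
        exact integral_congr fun x _ => by ring
    _ = -1 := by
        rw [integral_logit_mul_deriv_rpow_mul_one_sub_rpow hα hβ, neg_div,
          div_self (betaB_pos hα hβ).ne']
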